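/- For every w ∈ ℂ with Q_n(w) ≠ 0, the matrix w I_n − J_n is invertible and the (0,0) entry of (w I_n − J_n)^{−1} equals P_n(w)/Q_n(w). -/

import Mathlib

open Polynomial

/-- The `n × n` tridiagonal matrix `J_n` with diagonal entries `c_0, …, c_{n−1}`,
subdiagonal entries `d_1, …, d_{n−1}` (the entry in row `i`, column `i−1` is `d_i`),
and all superdiagonal entries equal to `1`. -/
noncomputable def Jmat (n : ℕ) (c d : ℕ → ℂ) : Matrix (Fin n) (Fin n) ℂ :=
  Matrix.of fun i j =>
    if (i : ℕ) = (j : ℕ) then c i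
    else if (i : ℕ) + 1 = (j : ℕ) then 1
    else if (i : ℕ) = (j : ℕ) + 1 then d i
    else 0

/-- `Q_0 = 1`, `Q_1 = w − c_0`, `Q_{l+1} = (w − c_l) Q_l − d_l Q_{l−1}`. -/
noncomputable def Qpoly (c d : ℕ → ℂ) : ℕ → Polynomial ℂ
  | 0 => 1
  | 1 => X - C (c 0)
  | l + 2 => (X - C (c (l + 1))) * Qpoly c d (l + 1) - C (d (l + 1)) * Qpoly c d l

/-- `P_0 = 0`, `P_1 = 1`, `P_{l+1} = (w − c_l) P_l − d_l P_{l−1}`. -/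
noncomputable def Ppoly (c d : ℕ → ℂ) : ℕ → Polynomial ℂ
  | 0 => 0
  | 1 => 1
  | l + 2 => (X - C (c (l + 1))) * Ppoly c d (l + 1) - C (d (l + 1)) * Ppoly c d l

/-!
Expanding `det (w I − J_n)` along its first row and then its first column yields the three-term
recurrence read from the top-left corner of `J_n`; `Q_n` satisfies the same recurrence in terms of
the shifted sequences `c (· + 1)`, `d (· + 1)`, so `det (w I − J_n) = Q_n(w)`, i.e. `Q_n` is the
characteristic polynomial of `J_n`. By Cramer's rule the `(0,0)` entry of the inverse is the
`(0,0)` minor divided by the determinant; that minor is `w I − J_{n−1}` for the shifted sequences,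
whose determinant is the shifted `Q_{n−1}`, which is `P_n`.
-/

namespace Matrix

variable {R : Type*} [CommRing R]

theorem charmatrix_submatrix {m n : Type*} [Fintype m] [DecidableEq m] [Fintype n]
    [DecidableEq n] (M : Matrix n n R) {e : m → n} (he : Function.Injective e) :
    (charmatrix M).submatrix e e = charmatrix (M.submatrix e e) := by
  ext i j : 1
  obtain rfl | hij := eq_or_ne i j
  · simp [charmatrix_apply_eq]
  · simp [charmatrix_apply_ne _ _ _ hij, charmatrix_apply_ne _ _ _ (he.ne hij)]

theorem submatrix_smul_one_sub {m n : Type*} [DecidableEq m] [DecidableEq n] (M : Matrix n n R)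
    (t : R) {e : m → n} (he : Function.Injective e) :
    (t • (1 : Matrix n n R) - M).submatrix e e = t • 1 - M.submatrix e e := by
  ext i j
  simp [one_apply, he.eq_iff]

theorem det_smul_one_sub {n : Type*} [Fintype n] [DecidableEq n] (M : Matrix n n R) (t : R) :
    (t • (1 : Matrix n n R) - M).det = M.charpoly.eval t := by
  rw [eval_charpoly, scalar_apply, smul_one_eq_diagonal]

theorem det_succ_succ_of_first_row_col {n : ℕ} (A : Matrix (Fin (n + 2)) (Fin (n + 2)) R)
    (hrow : ∀ j : Fin n, A 0 j.succ.succ = 0) (hcol : ∀ i : Fin n, A i.succ.succ 0 = 0) :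
    A.det = A 0 0 * (A.submatrix Fin.succ Fin.succ).det
      - A 0 1 * A 1 0 * (A.submatrix (Fin.succ ∘ Fin.succ) (Fin.succ ∘ Fin.succ)).det := by
  set B := A.submatrix Fin.succ (Fin.succAbove 1) with hB
  have hB_minor : B.submatrix (Fin.succAbove 0) Fin.succ
      = A.submatrix (Fin.succ ∘ Fin.succ) (Fin.succ ∘ Fin.succ) := by
    ext i j
    simp [hB]
  have hB_det : B.det = A 1 0 * (A.submatrix (Fin.succ ∘ Fin.succ) (Fin.succ ∘ Fin.succ)).det := by
    rw [det_succ_column_zero, Fin.sum_univ_succ, hB_minor]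
    simp [hB, hcol]
  rw [det_succ_row_zero, Fin.sum_univ_succ, Fin.sum_univ_succ]
  simp only [Fin.coe_ofNat_eq_mod, Nat.zero_mod, pow_zero, one_mul, Fin.succAbove_zero,
    Fin.succ_zero_eq_one, Nat.one_mod, pow_one, neg_mul, ← hB, hB_det, hrow, mul_zero, zero_mul,
    Finset.sum_const_zero, add_zero]
  ring

theorem inv_apply_zero_zero {K : Type*} [Field K] {m : ℕ}
    (A : Matrix (Fin (m + 1)) (Fin (m + 1)) K) :
    A⁻¹ 0 0 = (A.submatrix Fin.succ Fin.succ).det / A.det := by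
  rw [inv_def, smul_apply, adjugate_fin_succ_eq_det_submatrix, Ring.inverse_eq_inv']
  simp [div_eq_inv_mul]

end Matrix

theorem Jmat_submatrix_succ (n : ℕ) (c d : ℕ → ℂ) :
    (Jmat (n + 1) c d).submatrix Fin.succ Fin.succ
      = Jmat n (fun k => c (k + 1)) (fun k => d (k + 1)) := by
  ext i j
  simp [Jmat]

theorem Qpoly_add_two_eq_front (m : ℕ) (c d : ℕ → ℂ) :
    Qpoly c d (m + 2)
      = (X - C (c 0)) * Qpoly (fun k => c (k + 1)) (fun k => d (k + 1)) (m + 1)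
        - C (d 1) * Qpoly (fun k => c (k + 2)) (fun k => d (k + 2)) m := by
  induction m using Nat.twoStepInduction with
  | zero => simp only [Qpoly]; ring
  | one => simp only [Qpoly]; ring
  | more m ih₁ ih₂ =>
    rw [Qpoly.eq_3 c d (m + 2), ih₁, ih₂, Qpoly.eq_3 (fun k => c (k + 1)) _ (m + 1),
      Qpoly.eq_3 (fun k => c (k + 2)) _ m]
    ring

theorem Ppoly_succ (m : ℕ) (c d : ℕ → ℂ) :
    Ppoly c d (m + 1) = Qpoly (fun k => c (k + 1)) (fun k => d (k + 1)) m := by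
  induction m using Nat.twoStepInduction with
  | zero => rfl
  | one => simp [Ppoly, Qpoly]
  | more m ih₁ ih₂ => rw [Ppoly.eq_3, ih₁, ih₂, Qpoly.eq_3]

theorem charpoly_Jmat (n : ℕ) (c d : ℕ → ℂ) : (Jmat n c d).charpoly = Qpoly c d n := by
  induction n using Nat.twoStepInduction generalizing c d with
  | zero => simp [Qpoly]
  | one => simp [Matrix.charpoly, Matrix.charmatrix_apply_eq, Jmat, Qpoly]
  | more n ih₁ ih₂ =>
    have hsucc : (Jmat (n + 2) c d).charmatrix.submatrix Fin.succ Fin.succ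
        = (Jmat (n + 1) (fun k => c (k + 1)) (fun k => d (k + 1))).charmatrix := by
      rw [Matrix.charmatrix_submatrix _ (Fin.succ_injective _), Jmat_submatrix_succ]
    have hsucc_succ : (Jmat (n + 2) c d).charmatrix.submatrix
        (Fin.succ ∘ Fin.succ) (Fin.succ ∘ Fin.succ)
        = (Jmat n (fun k => c (k + 2)) (fun k => d (k + 2))).charmatrix := by
      rw [Matrix.charmatrix_submatrix _ ((Fin.succ_injective _).comp (Fin.succ_injective _)),
        ← Matrix.submatrix_submatrix, Jmat_submatrix_succ, Jmat_submatrix_succ]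
    rw [Matrix.charpoly, Matrix.det_succ_succ_of_first_row_col, hsucc, hsucc_succ,
      ← Matrix.charpoly, ← Matrix.charpoly, ih₁, ih₂, Qpoly_add_two_eq_front]
    · simp [Jmat]
    · intro j
      simp [Matrix.charmatrix_apply_ne _ _ _ (Fin.succ_ne_zero _).symm, Jmat]
    · intro i
      simp [Jmat]

/-- For every `w ∈ ℂ` with `Q_n(w) ≠ 0`, the matrix `w I_n − J_n` is invertible
and its `(0,0)` entry of the inverse equals `P_n(w)/Q_n(w)`. -/
theorem resolvent_entry (n : ℕ) (hn : 1 ≤ n) (c d : ℕ → ℂ) (w : ℂ)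
    (hw : eval w (Qpoly c d n) ≠ 0) :
    IsUnit (w • (1 : Matrix (Fin n) (Fin n) ℂ) - Jmat n c d) ∧
    (w • (1 : Matrix (Fin n) (Fin n) ℂ) - Jmat n c d)⁻¹ ⟨0, hn⟩ ⟨0, hn⟩
      = eval w (Ppoly c d n) / eval w (Qpoly c d n) := by
  have hdet : (w • (1 : Matrix (Fin n) (Fin n) ℂ) - Jmat n c d).det = eval w (Qpoly c d n) := by
    rw [Matrix.det_smul_one_sub, charpoly_Jmat]
  refine ⟨by rw [Matrix.isUnit_iff_isUnit_det, hdet]; exact hw.isUnit, ?_⟩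
  obtain ⟨m, rfl⟩ := Nat.exists_eq_add_of_le' hn
  rw [show (⟨0, hn⟩ : Fin (m + 1)) = 0 from rfl, Matrix.inv_apply_zero_zero,
    Matrix.submatrix_smul_one_sub _ _ (Fin.succ_injective _), Jmat_submatrix_succ,
    Matrix.det_smul_one_sub, charpoly_Jmat, hdet, Ppoly_succ]
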